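/- arXiv:2209.13859 — 3 statements merged into one kernel-verified Lean document; each statement's English description precedes it below -/
import Mathlib

section
/- For every r ≥ 2 and n = r, there is a Nullstellensatz certificate of degree binom(r,2) − 1 for the infeasibility of the Ramsey system encoding R(r,2) > r: explicitly, with edges labeled 1,…,N (N = binom(r,2)), over F_2 one has 1 = Σ_{j=1}^{N} (∏_{m<j} x_{1,m})(1 + x_{1,j} + x_{2,j}) + x_{2,1} + Σ_{j=2}^{N} (∏_{m<j} x_{1,m}) x_{2,j} + ∏_{m=1}^{N} x_{1,m}. -/
/-!
In characteristic 2 the `j`-th pair of summands collapses to `(∏_{m<j} x_{1,m}) (x_{1,j} - 1)`.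
These telescope to `∏_m x_{1,m} - 1`, and adding the last generator `∏_m x_{1,m}` leaves `1`.
-/

open MvPolynomial Finset

noncomputable section

/-- The coefficient polynomial `∏_{m < j} x_{1,m}`. -/
def pref (N : ℕ) (j : Fin N) : MvPolynomial (Fin 2 × Fin N) (ZMod 2) :=
  ∏ m ∈ Finset.univ.filter (fun m => m < j), X (0, m)

theorem Fin.sum_prod_Iio_mul_sub_one {R : Type*} [CommRing R] :
    ∀ {n : ℕ} (f : Fin n → R), ∑ j, (∏ i < j, f i) * (f j - 1) = ∏ i, f i - 1
  | 0, _ => by simp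
  | n + 1, f => by
    have hlast : ∏ i < Fin.last n, f i = ∏ i : Fin n, f i.castSucc := by
      rw [Fin.Iio_last_eq_map, prod_map]
      rfl
    rw [Fin.sum_univ_castSucc, Fin.prod_univ_castSucc, hlast]
    simp_rw [Fin.prod_Iio_castSucc]
    rw [Fin.sum_prod_Iio_mul_sub_one fun i => f i.castSucc]
    ring

theorem Fin.sum_prod_Iio_certificate_eq_one {R : Type*} [CommRing R] [CharP R 2] {n : ℕ}
    (x y : Fin n → R) :
    ∑ j, (∏ i < j, x i) * (1 + x j + y j) + ∑ j, (∏ i < j, x i) * y j + ∏ i, x i = 1 := by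
  have h2 : (2 : R) = 0 := CharTwo.two_eq_zero
  have hterm : ∀ j, (∏ i < j, x i) * (1 + x j + y j) + (∏ i < j, x i) * y j =
      (∏ i < j, x i) * (x j - 1) := fun j => by
    linear_combination ((∏ i < j, x i) * (1 + y j)) * h2
  rw [← sum_add_distrib, sum_congr rfl fun j _ => hterm j, Fin.sum_prod_Iio_mul_sub_one]
  linear_combination (∏ i, x i - 1) * h2

theorem MvPolynomial.totalDegree_prod_X_le {R σ ι : Type*} [CommSemiring R] [Nontrivial R]
    (s : Finset ι) (v : ι → σ) : (∏ i ∈ s, X (v i) : MvPolynomial σ R).totalDegree ≤ #s :=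
  (totalDegree_finsetProd _ _).trans (by simp)

theorem pref_eq_prod_Iio (N : ℕ) (j : Fin N) : pref N j = ∏ m < j, X (0, m) := by
  rw [pref, filter_gt_eq_Iio]

theorem totalDegree_pref_le (N : ℕ) (j : Fin N) : (pref N j).totalDegree ≤ N - 1 := by
  rw [pref_eq_prod_Iio]
  exact (totalDegree_prod_X_le _ _).trans (Fin.card_Iio j ▸ Nat.le_sub_one_of_lt j.isLt)

theorem nullstellensatz_certificate_R_r_2_general (r : ℕ) :
    ((1 : MvPolynomial (Fin 2 × Fin (r.choose 2)) (ZMod 2)) =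
      (∑ j : Fin (r.choose 2), pref (r.choose 2) j * (1 + X (0, j) + X (1, j))) +
      (∑ j : Fin (r.choose 2), pref (r.choose 2) j * X (1, j)) +
      ∏ m : Fin (r.choose 2), X (0, m)) ∧
    ∀ j : Fin (r.choose 2), (pref (r.choose 2) j).totalDegree ≤ r.choose 2 - 1 := by
  refine ⟨?_, totalDegree_pref_le _⟩
  simp only [pref_eq_prod_Iio]
  exact (Fin.sum_prod_Iio_certificate_eq_one (fun m => X (0, m)) fun m => X (1, m)).symm

/-- Explicit Nullstellensatz certificate of degree `binom(r,2) - 1` that `R(r,2) ≤ r`. -/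
theorem nullstellensatz_certificate_R_r_2 (r : ℕ) (hr : 2 ≤ r) :
    ((1 : MvPolynomial (Fin 2 × Fin (r.choose 2)) (ZMod 2)) =
      (∑ j : Fin (r.choose 2), pref (r.choose 2) j * (1 + X (0, j) + X (1, j))) +
      (∑ j : Fin (r.choose 2), pref (r.choose 2) j * X (1, j)) +
      ∏ m : Fin (r.choose 2), X (0, m)) ∧
    ∀ j : Fin (r.choose 2), (pref (r.choose 2) j).totalDegree ≤ r.choose 2 - 1 :=
  nullstellensatz_certificate_R_r_2_general r
end
end

section
/- Every 2-coloring of {1,...,9} contains a monochromatic solution to x + 3y = 3z, i.e., the 2-color Rado number of the equation x + 3y = 3z is at most 9. Moreover, the following Builder strategy shows the corresponding Builder–Painter game value is at most 5: Builder selects 4, 6, 9, 3, 7; the solutions (x,y,z) = (6,4,6), (9,6,9), (3,3,4), (3,6,7), (9,4,7) force a monochromatic solution regardless of Painter's choices. -/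
open Finset

/-- A monochromatic solution to `x + 3y = 3z` over `[9]` fully colored by the partial coloring. -/
def WonRado (χ : ℕ → Option (Fin 2)) : Prop :=
  ∃ x ∈ Icc 1 9, ∃ y ∈ Icc 1 9, ∃ z ∈ Icc 1 9, x + 3 * y = 3 * z ∧
    ∃ c : Fin 2, χ x = some c ∧ χ y = some c ∧ χ z = some c

/-- Builder (picking integers in `[9]`, Painter 2-coloring them) can force a
monochromatic solution to `x + 3y = 3z` within `t` more turns. -/
def BuilderWinsRado : (ℕ → Option (Fin 2)) → ℕ → Prop
  | χ, 0 => WonRado χ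
  | χ, t + 1 => WonRado χ ∨ ∃ m ∈ Icc 1 9, χ m = none ∧
      ∀ c : Fin 2, BuilderWinsRado (Function.update χ m (some c)) t

/-!
Every 2-coloring of `{3, 4, 6, 7, 9}` already contains one of the solutions
`(6,4,6)`, `(9,6,9)`, `(3,3,4)`, `(3,6,7)`, `(9,4,7)`: if neither `(6,4,6)` nor `(9,6,9)` is
monochromatic then `4` and `9` share the color opposite to `6`, if `(3,3,4)` is not then `3` has
the color of `6`, and `7` then completes `(3,6,7)` or `(9,4,7)`. Hence Builder wins the game by
picking these five numbers in any order, whatever Painter does.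
-/

def forcingSet : Finset ℕ := {3, 4, 6, 7, 9}

theorem forcingSet_subset_Icc : forcingSet ⊆ Icc 1 9 := by decide

theorem exists_monochromatic_solution_mem_forcingSet (f : ℕ → Fin 2) :
    ∃ x ∈ forcingSet, ∃ y ∈ forcingSet, ∃ z ∈ forcingSet,
      x + 3 * y = 3 * z ∧ f x = f y ∧ f y = f z := by
  have key : ∀ a3 a4 a6 a7 a9 : Fin 2,
      a6 = a4 ∨ a9 = a6 ∨ a3 = a4 ∨ (a3 = a6 ∧ a6 = a7) ∨ (a9 = a4 ∧ a4 = a7) := by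
    decide
  rcases key (f 3) (f 4) (f 6) (f 7) (f 9) with h | h | h | h | h
  · exact ⟨6, by decide, 4, by decide, 6, by decide, rfl, h, h.symm⟩
  · exact ⟨9, by decide, 6, by decide, 9, by decide, rfl, h, h.symm⟩
  · exact ⟨3, by decide, 3, by decide, 4, by decide, rfl, rfl, h⟩
  · exact ⟨3, by decide, 6, by decide, 7, by decide, rfl, h⟩
  · exact ⟨9, by decide, 4, by decide, 7, by decide, rfl, h⟩

theorem wonRado_of_isSome {χ : ℕ → Option (Fin 2)} (hχ : ∀ m ∈ forcingSet, (χ m).isSome) :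
    WonRado χ := by
  obtain ⟨x, hx, y, hy, z, hz, hsol, hxy, hyz⟩ :=
    exists_monochromatic_solution_mem_forcingSet (fun n => (χ n).getD 0)
  have hcol : ∀ m ∈ forcingSet, χ m = some ((χ m).getD 0) := fun m hm => by
    obtain ⟨c, hc⟩ := Option.isSome_iff_exists.mp (hχ m hm)
    simp [hc]
  exact ⟨x, forcingSet_subset_Icc hx, y, forcingSet_subset_Icc hy, z, forcingSet_subset_Icc hz,
    hsol, _, hcol x hx, hxy ▸ hcol y hy, (hxy.trans hyz) ▸ hcol z hz⟩

theorem builderWinsRado_length {ms : List ℕ} (hnd : ms.Nodup) (hms : ∀ m ∈ ms, m ∈ Icc 1 9)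
    {χ : ℕ → Option (Fin 2)} (hcol : ∀ m ∈ forcingSet, m ∉ ms → (χ m).isSome)
    (hfree : ∀ m ∈ ms, χ m = none) : BuilderWinsRado χ ms.length := by
  induction ms generalizing χ with
  | nil => exact wonRado_of_isSome fun m hm => hcol m hm List.not_mem_nil
  | cons m ms ih =>
    obtain ⟨hm, hnd⟩ := List.nodup_cons.mp hnd
    refine Or.inr ⟨m, hms m List.mem_cons_self, hfree m List.mem_cons_self, fun c => ?_⟩
    refine ih hnd (fun n hn => hms n (List.mem_cons_of_mem _ hn)) (fun n hn hnms => ?_)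
      (fun n hn => ?_)
    · by_cases hnm : n = m
      · simp [hnm]
      · simpa [hnm] using hcol n hn (by simp [hnm, hnms])
    · have hnm : n ≠ m := fun h => hm (h ▸ hn)
      simpa [hnm] using hfree n (List.mem_cons_of_mem _ hn)

theorem rado_x_plus_3y_eq_3z :
    (∀ c : ℕ → Fin 2, ∃ x ∈ Icc 1 9, ∃ y ∈ Icc 1 9, ∃ z ∈ Icc 1 9,
        x + 3 * y = 3 * z ∧ c x = c y ∧ c y = c z) ∧
    BuilderWinsRado (fun _ => none) 5 ∧
    sInf {t | BuilderWinsRado (fun _ => none) t} ≤ 5 := by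
  have hwin : BuilderWinsRado (fun _ => none) 5 :=
    builderWinsRado_length (ms := [4, 6, 9, 3, 7]) (by decide) (by decide) (by decide)
      (fun _ _ => rfl)
  refine ⟨fun c => ?_, hwin, Nat.sInf_le hwin⟩
  obtain ⟨x, hx, y, hy, z, hz, h⟩ := exists_monochromatic_solution_mem_forcingSet c
  exact ⟨x, forcingSet_subset_Icc hx, y, forcingSet_subset_Icc hy, z, forcingSet_subset_Icc hz, h⟩
end

section
/- (Combinatorial Nullstellensatz) Let F be a field and f ∈ F[x_1,...,x_n] of total degree t_1 + ... + t_n with nonzero coefficient on the monomial x_1^{t_1}···x_n^{t_n}. If S_1,...,S_n ⊆ F satisfy |S_i| > t_i, then there exist s_i ∈ S_i with f(s_1,...,s_n) ≠ 0. -/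
open MvPolynomial

theorem combinatorial_nullstellensatz (F : Type) [Field F] (n : ℕ)
    (f : MvPolynomial (Fin n) F) (t : Fin n → ℕ)
    (hdeg : f.totalDegree = ∑ i, t i)
    (hcoef : f.coeff (Finsupp.equivFunOnFinite.symm t) ≠ 0)
    (S : Fin n → Finset F) (hS : ∀ i, t i < (S i).card) :
    ∃ s : Fin n → F, (∀ i, s i ∈ S i) ∧ eval s f ≠ 0 :=
  combinatorial_nullstellensatz_exists_eval_nonzero f _ hcoef
    (by rwa [Finsupp.degree_eq_sum]) S hS
end
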